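/- arXiv:0806.1963 — 2 statements merged into one kernel-verified Lean document; each statement's English description precedes it below -/
import Mathlib

section
/- (Weighted Hardy inequality used in the proofs) Let d ≥ 1 be an integer, p ∈ [2,∞) and γ ∈ ℝ. Then for every u ∈ C_c^∞(ℝ^d_+) one has γ² ∫_{ℝ^d_+} (x¹)^{γ−1} |u(x)|^p dx ≤ p² ∫_{ℝ^d_+} (x¹)^{γ+1} |u(x)|^{p−2} |Du(x)|² dx. -/
open MeasureTheory Real Set Function Filter

lemma sq_rpow_half' (t q : ℝ) : ((t ^ 2 : ℝ)) ^ (q / 2) = |t| ^ q := by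
  rw [← sq_abs, ← Real.rpow_natCast |t| 2, ← Real.rpow_mul (abs_nonneg t)]
  congr 1; ring

lemma integral_fderiv_apply_eq_zero {d : ℕ} (F : EuclideanSpace ℝ (Fin d) → ℝ)
    (hF : ContDiff ℝ 1 F) (hFc : HasCompactSupport F) (v : EuclideanSpace ℝ (Fin d)) :
    ∫ x, fderiv ℝ F x v = 0 := by
  obtain ⟨C, hC⟩ := ContDiff.lipschitzWith_of_hasCompactSupport hFc hF one_ne_zero
  have h := LipschitzWith.integral_lineDeriv_mul_eq (μ := volume)
    (LipschitzWith.const (1 : ℝ)) hC hFc v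
  have h0 : ∀ x : EuclideanSpace ℝ (Fin d), lineDeriv ℝ (fun _ => (1:ℝ)) x v = 0 := by
    intro x; simp [lineDeriv]
  have h1 : ∀ x : EuclideanSpace ℝ (Fin d), lineDeriv ℝ F x (-v) = -(fderiv ℝ F x v) := by
    intro x
    have hd : DifferentiableAt ℝ F x := (hF.differentiable one_ne_zero).differentiableAt
    rw [hd.lineDeriv_eq_fderiv, map_neg]
  simp only [h0, zero_mul, integral_zero, h1, mul_one] at h
  have := h.symm
  rw [integral_neg] at this
  linarith [this]

lemma amgm_aux {q a b c : ℝ} (hc : 0 < c) (ha : 0 ≤ a) (hb : 0 ≤ b) (h : q ^ 2 = a * b) :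
    |q| ≤ c / 2 * a + 1 / (2 * c) * b := by
  have key : 2 * c * |q| ≤ c ^ 2 * a + b := by
    have h4 : (2 * c * |q|) ^ 2 ≤ (c ^ 2 * a + b) ^ 2 := by
      nlinarith [sq_nonneg (c ^ 2 * a - b), sq_abs q]
    have h5 := Real.sqrt_le_sqrt h4
    rwa [Real.sqrt_sq (by positivity), Real.sqrt_sq (by positivity)] at h5
  have h2c : (0:ℝ) < 2 * c := by linarith
  rw [← mul_le_mul_iff_right₀ h2c]
  calc 2 * c * |q| ≤ c ^ 2 * a + b := key
    _ = 2 * c * (c / 2 * a + 1 / (2 * c) * b) := by field_simp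

set_option maxHeartbeats 1000000 in
/-- Weighted Hardy inequality on the half space: for `p ∈ [2,∞)`, `γ ∈ ℝ` and
`u ∈ C_c^∞(ℝ^d_+)`,
`γ² ∫ (x¹)^{γ−1} |u|^p dx ≤ p² ∫ (x¹)^{γ+1} |u|^{p−2} |Du|² dx`. -/
theorem stmt5 (d : ℕ) [NeZero d] (p γ : ℝ) (hp : 2 ≤ p)
    (u : EuclideanSpace ℝ (Fin d) → ℝ)
    (hu : ContDiff ℝ (⊤ : ℕ∞) u) (hsupp : HasCompactSupport u)
    (hsupp' : tsupport u ⊆ {x | 0 < x 0}) :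
    γ ^ 2 * ∫ x in {x : EuclideanSpace ℝ (Fin d) | 0 < x 0},
        (x 0) ^ (γ - 1) * |u x| ^ p ≤
      p ^ 2 * ∫ x in {x : EuclideanSpace ℝ (Fin d) | 0 < x 0},
        (x 0) ^ (γ + 1) * |u x| ^ (p - 2) * ‖fderiv ℝ u x‖ ^ 2 := by
  classical
  have hp0 : (0:ℝ) < p := by linarith
  have hp2 : (1:ℝ) ≤ p / 2 := by linarith
  have hpne : p / 2 ≠ 0 := by positivity
  have hud : Differentiable ℝ u := hu.differentiable (by simp)
  have hcont0 : Continuous fun x : EuclideanSpace ℝ (Fin d) => x 0 :=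
    (EuclideanSpace.proj (𝕜 := ℝ) (0 : Fin d)).continuous
  have hSmeas : MeasurableSet {x : EuclideanSpace ℝ (Fin d) | 0 < x 0} :=
    measurableSet_lt measurable_const hcont0.measurable
  obtain ⟨ε, hε, hεK⟩ : ∃ ε > 0, ∀ x ∈ tsupport u, ε ≤ x 0 := by
    rcases (tsupport u).eq_empty_or_nonempty with h | h
    · exact ⟨1, one_pos, by simp [h]⟩
    · obtain ⟨z, hz, hmin⟩ := hsupp.exists_isMinOn h hcont0.continuousOn
      exact ⟨z 0, hsupp' hz, fun x hx => hmin hx⟩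
  set ψ : ℝ → ℝ := fun t => Real.smoothTransition ((4 * t - ε) / ε) with hψdef
  have hψc : ContDiff ℝ 1 ψ := by
    apply Real.smoothTransition.contDiff.comp
    exact ((contDiff_const.mul contDiff_id).sub contDiff_const).div_const ε
  have hψ0 : ∀ t : ℝ, t ≤ ε / 4 → ψ t = 0 := by
    intro t ht
    apply Real.smoothTransition.zero_of_nonpos
    apply div_nonpos_of_nonpos_of_nonneg _ hε.le
    linarith
  have hψ1 : ∀ t : ℝ, ε / 2 ≤ t → ψ t = 1 := by
    intro t ht
    apply Real.smoothTransition.one_of_one_le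
    rw [le_div_iff₀ hε]
    linarith
  have hψnn : ∀ t : ℝ, 0 ≤ ψ t := fun t => Real.smoothTransition.nonneg _
  set Φ : ℝ → EuclideanSpace ℝ (Fin d) → ℝ := fun r x => ψ (x 0) * (x 0) ^ r with hΦdef
  have hΦc : ∀ r, ContDiff ℝ 1 (Φ r) := by
    intro r
    rw [contDiff_iff_contDiffAt]
    intro x
    rcases lt_or_ge (x 0) (ε / 4) with hx | hx
    · have hev : Φ r =ᶠ[nhds x] fun _ => (0:ℝ) := by
        filter_upwards [hcont0.continuousAt.preimage_mem_nhds (Iio_mem_nhds hx)] with y hy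
        simp only [mem_preimage, mem_Iio] at hy
        simp only [hΦdef]
        rw [hψ0 _ hy.le, zero_mul]
      exact (contDiffAt_const (c := (0:ℝ))).congr_of_eventuallyEq hev
    · have hx0 : (0:ℝ) < x 0 := lt_of_lt_of_le (by linarith) hx
      have h1 : ContDiffAt ℝ 1 (fun y : EuclideanSpace ℝ (Fin d) => ψ (y 0)) x :=
        hψc.contDiffAt.comp x ((EuclideanSpace.proj (𝕜 := ℝ) (0 : Fin d)).contDiff.contDiffAt)
      have h2 : ContDiffAt ℝ 1 (fun y : EuclideanSpace ℝ (Fin d) => (y 0) ^ r) x :=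
        (Real.contDiffAt_rpow_const_of_ne (ne_of_gt hx0)).comp x
          ((EuclideanSpace.proj (𝕜 := ℝ) (0 : Fin d)).contDiff.contDiffAt)
      exact h1.mul h2
  have hΦnn : ∀ r x, 0 ≤ Φ r x := by
    intro r x
    rcases le_or_gt (x 0) (ε / 4) with hx | hx
    · show 0 ≤ ψ (x 0) * (x 0) ^ r
      rw [hψ0 _ hx, zero_mul]
    · exact mul_nonneg (hψnn _) (Real.rpow_nonneg (by linarith) _)
  have hΦ0 : ∀ r (x : EuclideanSpace ℝ (Fin d)), x 0 ≤ 0 → Φ r x = 0 := by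
    intro r x hx
    show ψ (x 0) * (x 0) ^ r = 0
    rw [hψ0 _ (by linarith), zero_mul]
  have hΦsq : ∀ x, Φ γ x ^ 2 = Φ (γ - 1) x * Φ (γ + 1) x := by
    intro x
    rcases le_or_gt (x 0) 0 with hx | hx
    · rw [hΦ0 _ _ hx, hΦ0 _ _ hx, hΦ0 _ _ hx]; ring
    · have h : (x 0) ^ γ * (x 0) ^ γ = (x 0) ^ (γ - 1) * (x 0) ^ (γ + 1) := by
        rw [← Real.rpow_add hx, ← Real.rpow_add hx]
        congr 1; ring
      simp only [hΦdef]
      linear_combination (ψ (x 0))^2 * h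
  set w : ℝ → EuclideanSpace ℝ (Fin d) → ℝ := fun q x => (u x ^ 2) ^ (q / 2) with hwdef
  have hwabs : ∀ q x, w q x = |u x| ^ q := fun q x => sq_rpow_half' (u x) q
  have hwnn : ∀ q x, 0 ≤ w q x := fun q x => Real.rpow_nonneg (sq_nonneg _) _
  have hwp0 : ∀ x, u x = 0 → w p x = 0 := by
    intro x hx
    simp only [hwdef]
    rw [hx]
    simp [Real.zero_rpow hpne]
  have hwsplit : ∀ x, w p x = u x ^ 2 * w (p - 2) x := by
    intro x
    rcases eq_or_ne (u x) 0 with hx | hx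
    · rw [hwp0 x hx, hx]; ring
    · have hpos : (0:ℝ) < u x ^ 2 := by positivity
      simp only [hwdef]
      rw [show p / 2 = 1 + (p - 2) / 2 by ring, Real.rpow_add hpos, Real.rpow_one]
  have hwcont : ∀ q : ℝ, 0 ≤ q → Continuous (w q) := by
    intro q hq
    exact (Real.continuous_rpow_const (by positivity)).comp (hu.continuous.pow 2)
  have hwpc : ContDiff ℝ 1 (w p) := by
    have h1 : ContDiff ℝ 1 fun s : ℝ => s ^ (p / 2) :=
      Real.contDiff_rpow_const_of_le (n := 1) (by exact_mod_cast hp2)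
    exact h1.comp ((hu.of_le (by simp)).pow 2)
  have hwderiv : ∀ x, HasFDerivAt (w p) ((p * (u x * w (p - 2) x)) • fderiv ℝ u x) x := by
    intro x
    have hux : HasFDerivAt u (fderiv ℝ u x) x := (hud x).hasFDerivAt
    have h1 : HasFDerivAt (fun y => u y ^ 2) ((2 * u x) • fderiv ℝ u x) x := by
      have h := hux.mul hux
      have heq : (u * u) = fun y => u y ^ 2 := by funext y; simp only [Pi.mul_apply]; ring
      rw [heq] at h
      rw [two_mul, add_smul]
      exact h
    have h2 : HasDerivAt (fun s : ℝ => s ^ (p / 2)) (p / 2 * (u x ^ 2) ^ (p / 2 - 1)) (u x ^ 2) :=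
      Real.hasDerivAt_rpow_const (Or.inr hp2)
    have h3 := h2.comp_hasFDerivAt x h1
    have hw' : ((u x ^ 2 : ℝ)) ^ (p / 2 - 1) = w (p - 2) x := by
      simp only [hwdef]; congr 1; ring
    have h4 : (p * (u x * w (p - 2) x)) • fderiv ℝ u x
        = (p / 2 * (u x ^ 2) ^ (p / 2 - 1)) • ((2 * u x) • fderiv ℝ u x) := by
      rw [smul_smul]
      congr 1
      rw [hw']
      ring
    rw [h4]
    exact h3
  set e0 : EuclideanSpace ℝ (Fin d) := EuclideanSpace.single (0 : Fin d) (1:ℝ) with he0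
  have he0norm : ‖e0‖ = 1 := by rw [he0, EuclideanSpace.norm_single]; norm_num
  set Du : EuclideanSpace ℝ (Fin d) → ℝ := fun x => fderiv ℝ u x e0 with hDudef
  have hfdcont : Continuous fun x => fderiv ℝ u x := hu.continuous_fderiv (by simp)
  have hDucont : Continuous Du := hfdcont.clm_apply continuous_const
  set P : EuclideanSpace ℝ (Fin d) → ℝ := fun x => Φ (γ - 1) x * w p x with hPdef
  set Q : EuclideanSpace ℝ (Fin d) → ℝ := fun x => Φ γ x * (u x * (w (p - 2) x * Du x))
    with hQdef
  set R1 : EuclideanSpace ℝ (Fin d) → ℝ := fun x => Φ (γ + 1) x * (w (p - 2) x * Du x ^ 2)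
    with hR1def
  set R : EuclideanSpace ℝ (Fin d) → ℝ :=
    fun x => Φ (γ + 1) x * (w (p - 2) x * ‖fderiv ℝ u x‖ ^ 2) with hRdef
  set F : EuclideanSpace ℝ (Fin d) → ℝ := fun x => Φ γ x * w p x with hFdef
  have hzero : ∀ x, x ∉ tsupport u → u x = 0 := fun x hx => image_eq_zero_of_notMem_tsupport hx
  have hDzero : ∀ x, x ∉ tsupport u → fderiv ℝ u x = 0 := by
    intro x hx
    have hns : x ∉ Function.support (fderiv ℝ u) := fun h => hx (support_fderiv_subset ℝ h)
    exact Function.notMem_support.mp hns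
  -- pointwise derivative identity
  have hder : ∀ x, fderiv ℝ F x e0 = γ * P x + p * Q x := by
    intro x
    by_cases hx : x ∈ tsupport u
    · have hx0 : ε ≤ x 0 := hεK x hx
      have hψx : ψ (x 0) = 1 := hψ1 _ (by linarith)
      have hev : F =ᶠ[nhds x] fun y => (y 0) ^ γ * w p y := by
        filter_upwards [hcont0.continuousAt.preimage_mem_nhds
          (Ioi_mem_nhds (show ε/2 < x 0 by linarith))] with y hy
        simp only [mem_preimage, mem_Ioi] at hy
        simp only [hFdef, hΦdef]
        rw [hψ1 _ hy.le, one_mul]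
      have hπ : HasFDerivAt (fun y : EuclideanSpace ℝ (Fin d) => y 0)
          (EuclideanSpace.proj (𝕜 := ℝ) (0 : Fin d)) x :=
        (EuclideanSpace.proj (𝕜 := ℝ) (0 : Fin d)).hasFDerivAt
      have hne : x 0 ≠ 0 := ne_of_gt (by linarith)
      have h1 : HasFDerivAt (fun y : EuclideanSpace ℝ (Fin d) => (y 0) ^ γ)
          ((γ * (x 0) ^ (γ - 1)) • EuclideanSpace.proj (𝕜 := ℝ) (0 : Fin d)) x :=
        by have := (Real.hasDerivAt_rpow_const (x := x 0) (p := γ) (Or.inl hne)).comp_hasFDerivAt x hπ; exact this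
      have h3 := h1.mul (hwderiv x)
      have hfeq : fderiv ℝ F x = fderiv ℝ (fun y => (y 0) ^ γ * w p y) x := hev.fderiv_eq
      rw [hfeq, show (fun y => (y 0) ^ γ * w p y) = (fun y : EuclideanSpace ℝ (Fin d) => (y 0) ^ γ) * w p from rfl, h3.fderiv]
      have he0app : (EuclideanSpace.proj (𝕜 := ℝ) (0 : Fin d)) e0 = 1 := by
        simp [he0, PiLp.proj_apply, EuclideanSpace.single_apply]
      simp only [ContinuousLinearMap.add_apply, ContinuousLinearMap.coe_smul', Pi.smul_apply,
        smul_eq_mul, he0app, mul_one]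
      simp only [hPdef, hQdef, hΦdef, hψx, one_mul, ← hDudef]
      ring
    · have hx' : u =ᶠ[nhds x] 0 := notMem_tsupport_iff_eventuallyEq.mp hx
      have hux : u x = 0 := hzero x hx
      have hevF : F =ᶠ[nhds x] fun _ => (0:ℝ) := by
        filter_upwards [hx'] with y hy
        have : u y = 0 := hy
        simp only [hFdef]
        rw [hwp0 y this, mul_zero]
      have hfv : fderiv ℝ F x = 0 := by
        rw [hevF.fderiv_eq]
        exact fderiv_const_apply 0
      rw [hfv]
      simp only [ContinuousLinearMap.zero_apply, hPdef, hQdef, hwp0 x hux, hux]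
      ring
  -- integrability
  have hIaux : ∀ f : EuclideanSpace ℝ (Fin d) → ℝ, Continuous f →
      (∀ x, x ∉ tsupport u → f x = 0) → Integrable f volume := by
    intro f hf h0
    exact hf.integrable_of_hasCompactSupport (HasCompactSupport.intro hsupp h0)
  have hΦcont : ∀ r, Continuous (Φ r) := fun r => (hΦc r).continuous
  have hwm2cont : Continuous (w (p - 2)) := hwcont (p - 2) (by linarith)
  have hPint : Integrable P volume := by
    apply hIaux P ((hΦcont (γ - 1)).mul (hwcont p (by linarith)))
    intro x hx
    show Φ (γ - 1) x * w p x = 0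
    rw [hwp0 x (hzero x hx), mul_zero]
  have hQint : Integrable Q volume := by
    apply hIaux Q ((hΦcont γ).mul (hu.continuous.mul (hwm2cont.mul hDucont)))
    intro x hx
    show Φ γ x * (u x * (w (p - 2) x * Du x)) = 0
    rw [hzero x hx]
    ring
  have hR1int : Integrable R1 volume := by
    apply hIaux R1 ((hΦcont (γ + 1)).mul (hwm2cont.mul (hDucont.pow 2)))
    intro x hx
    show Φ (γ + 1) x * (w (p - 2) x * Du x ^ 2) = 0
    have hD0 : Du x = 0 := by
      show (fderiv ℝ u x) e0 = 0
      rw [hDzero x hx]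
      rfl
    rw [hD0]
    ring
  have hRint : Integrable R volume := by
    apply hIaux R ((hΦcont (γ + 1)).mul (hwm2cont.mul (hfdcont.norm.pow 2)))
    intro x hx
    show Φ (γ + 1) x * (w (p - 2) x * ‖fderiv ℝ u x‖ ^ 2) = 0
    rw [hDzero x hx]
    simp
  -- integration by parts
  have hFc1 : ContDiff ℝ 1 F := (hΦc γ).mul hwpc
  have hFcs : HasCompactSupport F := by
    apply HasCompactSupport.intro hsupp
    intro x hx
    show Φ γ x * w p x = 0
    rw [hwp0 x (hzero x hx), mul_zero]
  have hibp0 : ∫ x, fderiv ℝ F x e0 = 0 := integral_fderiv_apply_eq_zero F hFc1 hFcs e0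
  have hibp : γ * (∫ x, P x) + p * (∫ x, Q x) = 0 := by
    have h : ∫ x, (γ * P x + p * Q x) = 0 := by
      rw [← hibp0]
      exact integral_congr_ae (Eventually.of_forall fun x => (hder x).symm)
    rwa [integral_add (hPint.const_mul γ) (hQint.const_mul p), integral_const_mul,
      integral_const_mul] at h
  -- pointwise algebra
  have hQsq : ∀ x, Q x ^ 2 = P x * R1 x := by
    intro x
    have h1 := hΦsq x
    have h2 := hwsplit x
    simp only [hPdef, hQdef, hR1def]
    rw [h2]
    linear_combination (u x ^ 2 * w (p - 2) x ^ 2 * Du x ^ 2) * h1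
  have hPnn : ∀ x, 0 ≤ P x := fun x => mul_nonneg (hΦnn _ _) (hwnn _ _)
  have hR1nn : ∀ x, 0 ≤ R1 x :=
    fun x => mul_nonneg (hΦnn _ _) (mul_nonneg (hwnn _ _) (sq_nonneg _))
  have hRnn : ∀ x, 0 ≤ R x :=
    fun x => mul_nonneg (hΦnn _ _) (mul_nonneg (hwnn _ _) (sq_nonneg _))
  have hR1leR : ∀ x, R1 x ≤ R x := by
    intro x
    have h1 : |Du x| ≤ ‖fderiv ℝ u x‖ := by
      have h := (fderiv ℝ u x).le_opNorm e0
      rw [he0norm, mul_one] at h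
      simpa [hDudef] using h
    have h2 : Du x ^ 2 ≤ ‖fderiv ℝ u x‖ ^ 2 := by
      rw [← sq_abs (Du x)]
      exact pow_le_pow_left₀ (abs_nonneg _) h1 2
    exact mul_le_mul_of_nonneg_left (mul_le_mul_of_nonneg_left h2 (hwnn _ _)) (hΦnn _ _)
  -- main inequality between full-space integrals
  have key : γ ^ 2 * (∫ x, P x) ≤ p ^ 2 * (∫ x, R x) := by
    rcases eq_or_ne γ 0 with hγ | hγ
    · rw [hγ]
      simp only [ne_eq, OfNat.ofNat_ne_zero, not_false_eq_true, zero_pow, zero_mul]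
      exact mul_nonneg (by positivity) (integral_nonneg hRnn)
    · set c : ℝ := |γ| / p with hcdef
      have hcpos : 0 < c := div_pos (abs_pos.mpr hγ) hp0
      have hpt : ∀ x, |Q x| ≤ c / 2 * P x + 1 / (2 * c) * R1 x :=
        fun x => amgm_aux hcpos (hPnn x) (hR1nn x) (hQsq x)
      have hIQ : |∫ x, Q x| ≤ c / 2 * (∫ x, P x) + 1 / (2 * c) * (∫ x, R1 x) := by
        have h1 : |∫ x, Q x| ≤ ∫ x, |Q x| := by
          simpa [Real.norm_eq_abs] using norm_integral_le_integral_norm (μ := volume) Q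
        have h2 : ∫ x, |Q x| ≤ ∫ x, (c / 2 * P x + 1 / (2 * c) * R1 x) :=
          integral_mono hQint.abs ((hPint.const_mul _).add (hR1int.const_mul _)) hpt
        rw [integral_add (hPint.const_mul _) (hR1int.const_mul _), integral_const_mul,
          integral_const_mul] at h2
        linarith
      have hR1R : (∫ x, R1 x) ≤ ∫ x, R x := integral_mono hR1int hRint hR1leR
      have habs : 0 < |γ| := abs_pos.mpr hγ
      have hP0 : 0 ≤ ∫ x, P x := integral_nonneg hPnn
      have hγP : |γ| * (∫ x, P x) = p * |∫ x, Q x| := by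
        have hlin : γ * (∫ x, P x) = -(p * (∫ x, Q x)) := by linarith
        calc |γ| * (∫ x, P x) = |γ * (∫ x, P x)| := by
              rw [abs_mul, abs_of_nonneg hP0]
          _ = |p * (∫ x, Q x)| := by rw [hlin, abs_neg]
          _ = p * |∫ x, Q x| := by rw [abs_mul, abs_of_pos hp0]
      have e1 : p * (c / 2) = |γ| / 2 := by
        rw [hcdef]; field_simp
      have e2 : p * (1 / (2 * c)) = p ^ 2 / (2 * |γ|) := by
        rw [hcdef]; field_simp
      have step : |γ| * (∫ x, P x) ≤ |γ| / 2 * (∫ x, P x) + p ^ 2 / (2 * |γ|) * (∫ x, R x) := by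
        rw [hγP]
        have h1 : p * |∫ x, Q x| ≤ p * (c / 2 * (∫ x, P x) + 1 / (2 * c) * (∫ x, R1 x)) :=
          mul_le_mul_of_nonneg_left hIQ hp0.le
        have h3 : p ^ 2 / (2 * |γ|) * (∫ x, R1 x) ≤ p ^ 2 / (2 * |γ|) * (∫ x, R x) :=
          mul_le_mul_of_nonneg_left hR1R (by positivity)
        calc p * |∫ x, Q x| ≤ p * (c / 2) * (∫ x, P x) + p * (1 / (2 * c)) * (∫ x, R1 x) := by
              nlinarith [h1]
          _ = |γ| / 2 * (∫ x, P x) + p ^ 2 / (2 * |γ|) * (∫ x, R1 x) := by rw [e1, e2]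
          _ ≤ _ := by linarith
      have hhalf : |γ| / 2 * (∫ x, P x) ≤ p ^ 2 / (2 * |γ|) * (∫ x, R x) := by linarith
      have hmul := mul_le_mul_of_nonneg_left hhalf
        (le_of_lt (show (0:ℝ) < 2 * |γ| by linarith))
      calc γ ^ 2 * (∫ x, P x) = 2 * |γ| * (|γ| / 2 * (∫ x, P x)) := by
            rw [← sq_abs γ]; ring
        _ ≤ 2 * |γ| * (p ^ 2 / (2 * |γ|) * (∫ x, R x)) := hmul
        _ = p ^ 2 * (∫ x, R x) := by
            rw [show 2 * |γ| * (p ^ 2 / (2 * |γ|) * (∫ x, R x)) = (2 * |γ|) / (2 * |γ|) * (p ^ 2 * (∫ x, R x)) by ring,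
              div_self (by positivity), one_mul]
  -- identify the set integrals
  have hLHS : (∫ x in {x : EuclideanSpace ℝ (Fin d) | 0 < x 0},
      (x 0) ^ (γ - 1) * |u x| ^ p) = ∫ x, P x := by
    rw [setIntegral_congr_fun hSmeas (g := P) ?_,
      setIntegral_eq_integral_of_forall_compl_eq_zero ?_]
    · intro x hx
      have hx0 : ¬ (0 < x 0) := hx
      push_neg at hx0
      simp only [hPdef]
      rw [hΦ0 _ _ hx0, zero_mul]
    · intro x hx
      rcases eq_or_ne (u x) 0 with h0 | h0
      · simp only [hPdef]
        rw [h0, hwp0 x h0, mul_zero, abs_zero, Real.zero_rpow (ne_of_gt hp0), mul_zero]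
      · have hxs : x ∈ tsupport u := subset_tsupport u (Function.mem_support.mpr h0)
        have hψx : ψ (x 0) = 1 := hψ1 _ (by linarith [hεK x hxs])
        simp only [hPdef, hΦdef, hψx, one_mul, hwabs]
  have hRHS : (∫ x in {x : EuclideanSpace ℝ (Fin d) | 0 < x 0},
      (x 0) ^ (γ + 1) * |u x| ^ (p - 2) * ‖fderiv ℝ u x‖ ^ 2) = ∫ x, R x := by
    rw [setIntegral_congr_fun hSmeas (g := R) ?_,
      setIntegral_eq_integral_of_forall_compl_eq_zero ?_]
    · intro x hx
      have hx0 : ¬ (0 < x 0) := hx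
      push_neg at hx0
      simp only [hRdef]
      rw [hΦ0 _ _ hx0, zero_mul]
    · intro x hx
      by_cases hxs : x ∈ tsupport u
      · have hψx : ψ (x 0) = 1 := hψ1 _ (by linarith [hεK x hxs])
        simp only [hRdef, hΦdef, hψx, one_mul, hwabs]
        ring
      · have h0 : fderiv ℝ u x = 0 := hDzero x hxs
        show x 0 ^ (γ + 1) * |u x| ^ (p - 2) * ‖fderiv ℝ u x‖ ^ 2
            = Φ (γ + 1) x * (w (p - 2) x * ‖fderiv ℝ u x‖ ^ 2)
        rw [h0]
        simp
  rw [hLHS, hRHS]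
  exact key
end

section
/- (Gradient kernel estimate from the proof of Lemma 6.1.2) Let d ≥ 1 be an integer and γ ∈ ℝ. Let ζ : ℝ^d_+ → [0,∞) be a nonnegative C¹ function with compact support contained in ℝ^d_+. For y, x ∈ ℝ^d_+ define ζ^y(x) = (x¹)^{γ+1} ζ(y¹x¹, y¹(y'−x')) (y¹)^{d−1}, and let D_x ζ^y denote the gradient of ζ^y in the variable x. Then for every x ∈ ℝ^d_+, ∫_{ℝ^d_+} |D_x ζ^y(x)| dy ≤ (x¹)^{γ−1} ( |γ+1| ∫_{ℝ^d_+} ζ(z) dz + N_d ∫_{ℝ^d_+} |Dζ(z)| z¹ dz ), where N_d is a constant depending only on d (one may take N_d = 2). -/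
open MeasureTheory Finset

/-!
For fixed `x`, the substitution `z = (y¹x¹, y¹(y' − x'))` maps `ℝ^d_+` bijectively onto
itself with Jacobian `J(y) = x¹ (y¹)^{d−1}`. In `x` the argument `z` moves affinely with
linear part `y¹ · diag(1, −1, …, −1)`, so by the product and chain rules
`|D_x ζ^y(x)| ≤ |γ+1| (x¹)^γ (y¹)^{d−1} ζ(z) + (x¹)^{γ+1} (y¹)^d |Dζ(z)|
  = (x¹)^{γ−1} J(y) (|γ+1| ζ(z) + z¹ |Dζ(z)|)`.
Integrating in `y` and changing variables gives the estimate, even with `N_d = 1`.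
-/

/-- The kernel `ζ^y(x) = (x¹)^{γ+1} ζ(y¹x¹, y¹(y'−x')) (y¹)^{d−1}`. -/
noncomputable def kern (d : ℕ) [NeZero d] (γ : ℝ) (ζ : (Fin d → ℝ) → ℝ)
    (y x : Fin d → ℝ) : ℝ :=
  (x 0) ^ (γ + 1) * ζ (fun i => if i = 0 then y 0 * x 0 else y 0 * (y i - x i)) *
    (y 0) ^ ((d : ℝ) - 1)

/-- The Euclidean norm of the gradient of a function on `ℝ^d`. -/
noncomputable def gradNorm (d : ℕ) (f : (Fin d → ℝ) → ℝ) (x : Fin d → ℝ) : ℝ :=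
  Real.sqrt (∑ i, (fderiv ℝ f x (Pi.single i 1)) ^ 2)

section GradNorm

variable {d : ℕ} {f g : (Fin d → ℝ) → ℝ} {x : Fin d → ℝ}

noncomputable def coordGrad (f : (Fin d → ℝ) → ℝ) (x : Fin d → ℝ) :
    EuclideanSpace ℝ (Fin d) :=
  WithLp.toLp 2 fun i => fderiv ℝ f x (Pi.single i 1)

theorem gradNorm_eq_norm_coordGrad : gradNorm d f x = ‖coordGrad f x‖ := by
  simp [gradNorm, coordGrad, EuclideanSpace.norm_eq]

theorem coordGrad_mul (hf : DifferentiableAt ℝ f x) (hg : DifferentiableAt ℝ g x) :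
    coordGrad (fun y => f y * g y) x = f x • coordGrad g x + g x • coordGrad f x := by
  ext i
  simp only [coordGrad, fderiv_fun_mul hf hg]
  simp

theorem gradNorm_mul_le (hf : DifferentiableAt ℝ f x) (hg : DifferentiableAt ℝ g x) :
    gradNorm d (fun y => f y * g y) x ≤ |f x| * gradNorm d g x + |g x| * gradNorm d f x := by
  simp only [gradNorm_eq_norm_coordGrad, coordGrad_mul hf hg]
  refine (norm_add_le _ _).trans_eq ?_
  rw [norm_smul, norm_smul, Real.norm_eq_abs, Real.norm_eq_abs]

theorem gradNorm_mul_const (hf : DifferentiableAt ℝ f x) (c : ℝ) :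
    gradNorm d (fun y => f y * c) x = gradNorm d f x * |c| := by
  have : coordGrad (fun y => f y * c) x = c • coordGrad f x := by
    ext i
    simp only [coordGrad, fderiv_mul_const hf]
    simp
  rw [gradNorm_eq_norm_coordGrad, gradNorm_eq_norm_coordGrad, this, norm_smul, Real.norm_eq_abs,
    mul_comm]

theorem gradNorm_comp_apply {h : ℝ → ℝ} {h' : ℝ} (i : Fin d) (hh : HasDerivAt h h' (x i)) :
    gradNorm d (fun y => h (y i)) x = |h'| := by
  have hd : HasFDerivAt (fun y => h (y i)) (h' • ContinuousLinearMap.proj i) x :=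
    hh.comp_hasFDerivAt x
      (ContinuousLinearMap.proj (R := ℝ) (φ := fun _ : Fin d => ℝ) i).hasFDerivAt
  have : coordGrad (fun y => h (y i)) x = EuclideanSpace.single i h' := by
    ext j
    simp [coordGrad, hd.fderiv, Pi.single_apply, eq_comm]
  rw [gradNorm_eq_norm_coordGrad, this, PiLp.norm_single, Real.norm_eq_abs]

theorem gradNorm_comp_mul_add {h : (Fin d → ℝ) → ℝ} {a b : Fin d → ℝ} {c : ℝ}
    (ha : ∀ i, a i ^ 2 = c ^ 2) (hh : DifferentiableAt ℝ h (a * x + b)) :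
    gradNorm d (fun y => h (a * y + b)) x = |c| * gradNorm d h (a * x + b) := by
  have hT : HasFDerivAt (fun y => a * y + b) (ContinuousLinearMap.mul ℝ (Fin d → ℝ) a) x :=
    (ContinuousLinearMap.mul ℝ (Fin d → ℝ) a).hasFDerivAt.add_const b
  have hd : HasFDerivAt (fun y => h (a * y + b))
      ((fderiv ℝ h (a * x + b)).comp (ContinuousLinearMap.mul ℝ (Fin d → ℝ) a)) x :=
    hh.hasFDerivAt.comp x hT
  have : coordGrad (fun y => h (a * y + b)) x =
      WithLp.toLp 2 fun i => a i * fderiv ℝ h (a * x + b) (Pi.single i 1) := by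
    ext i
    have hsingle : a * Pi.single i 1 = a i • Pi.single i (1 : ℝ) := by
      ext j
      by_cases hj : j = i <;> simp [hj]
    simp [coordGrad, hd.fderiv, hsingle]
  rw [gradNorm_eq_norm_coordGrad, gradNorm_eq_norm_coordGrad, this, EuclideanSpace.norm_eq,
    EuclideanSpace.norm_eq, ← Real.sqrt_sq_eq_abs, ← Real.sqrt_mul (sq_nonneg c),
    Finset.mul_sum]
  congr 1
  refine Finset.sum_congr rfl fun i _ => ?_
  simp [coordGrad, mul_pow, ha]

theorem ContDiff.continuous_gradNorm (hf : ContDiff ℝ 1 f) : Continuous (gradNorm d f) := by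
  have := hf.continuous_fderiv one_ne_zero
  unfold gradNorm
  fun_prop

theorem HasCompactSupport.gradNorm (hf : HasCompactSupport f) :
    HasCompactSupport (gradNorm d f) :=
  (hf.fderiv ℝ).mono fun x hx h0 => hx (by simp [_root_.gradNorm, h0])

end GradNorm

section KernArg

variable {d : ℕ} [NeZero d]

noncomputable def kernArg (x y : Fin d → ℝ) : Fin d → ℝ :=
  fun i => if i = 0 then y 0 * x 0 else y 0 * (y i - x i)

theorem kernArg_eq_mul_add (x y : Fin d → ℝ) :
    kernArg x y = (fun i => if i = 0 then y 0 else -y 0) * x +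
      fun i => if i = 0 then 0 else y 0 * y i := by
  ext i
  by_cases hi : i = 0 <;> simp only [kernArg, hi, ↓reduceIte, Pi.add_apply, Pi.mul_apply] <;> ring

theorem gradNorm_kern_le {γ : ℝ} {ζ : (Fin d → ℝ) → ℝ} (hζ : Differentiable ℝ ζ)
    (hζ0 : ∀ z, 0 ≤ ζ z) {x y : Fin d → ℝ} (hx : 0 < x 0) (hy : 0 < y 0) :
    gradNorm d (kern d γ ζ y) x ≤ x 0 ^ (γ - 1) * (x 0 * y 0 ^ ((d : ℝ) - 1) *
      (|γ + 1| * ζ (kernArg x y) + gradNorm d ζ (kernArg x y) * kernArg x y 0)) := by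
  have hpow : HasDerivAt (fun t => t ^ (γ + 1)) ((γ + 1) * x 0 ^ γ) (x 0) := by
    simpa using Real.hasDerivAt_rpow_const (p := γ + 1) (Or.inl hx.ne')
  have hζA : gradNorm d (fun x' => ζ (kernArg x' y)) x = y 0 * gradNorm d ζ (kernArg x y) := by
    simp only [kernArg_eq_mul_add]
    rw [gradNorm_comp_mul_add (c := y 0) (fun i => by split_ifs <;> ring) (hζ _), abs_of_pos hy]
  have hdiff_pow : DifferentiableAt ℝ (fun x' : Fin d → ℝ => x' 0 ^ (γ + 1)) x :=
    (differentiableAt_apply 0 x).rpow_const (Or.inl hx.ne')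
  have hdiff_ζA : DifferentiableAt ℝ (fun x' => ζ (kernArg x' y)) x := by
    simp only [kernArg_eq_mul_add]
    fun_prop
  calc gradNorm d (kern d γ ζ y) x
      = gradNorm d (fun x' => x' 0 ^ (γ + 1) * ζ (kernArg x' y)) x * |y 0 ^ ((d : ℝ) - 1)| :=
        gradNorm_mul_const (hdiff_pow.mul hdiff_ζA) _
    _ ≤ (|x 0 ^ (γ + 1)| * (y 0 * gradNorm d ζ (kernArg x y)) +
          |ζ (kernArg x y)| * |(γ + 1) * x 0 ^ γ|) * |y 0 ^ ((d : ℝ) - 1)| := by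
        rw [← hζA, ← gradNorm_comp_apply 0 hpow]
        gcongr
        exact gradNorm_mul_le hdiff_pow hdiff_ζA
    _ = _ := by
        have hγ : x 0 ^ γ = x 0 ^ (γ - 1) * x 0 := by
          rw [← Real.rpow_add_one hx.ne', sub_add_cancel]
        rw [abs_of_pos (Real.rpow_pos_of_pos hx _), abs_of_nonneg (hζ0 _), abs_mul,
          abs_of_pos (Real.rpow_pos_of_pos hx _), abs_of_pos (Real.rpow_pos_of_pos hy _),
          Real.rpow_add_one hx.ne', hγ]
        simp only [kernArg, if_pos]
        ring

def halfSpace (d : ℕ) [NeZero d] : Set (Fin d → ℝ) := {z | 0 < z 0}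

theorem measurableSet_halfSpace : MeasurableSet (halfSpace d) :=
  measurableSet_lt measurable_const (measurable_pi_apply 0)

noncomputable def kernArgInv (x z : Fin d → ℝ) : Fin d → ℝ :=
  fun i => if i = 0 then z 0 / x 0 else x i + x 0 * z i / z 0

theorem bijOn_kernArg {x : Fin d → ℝ} (hx : 0 < x 0) :
    Set.BijOn (kernArg x) (halfSpace d) (halfSpace d) := by
  refine Set.InvOn.bijOn (f' := kernArgInv x)
    ⟨fun y (hy : 0 < y 0) => ?_, fun z (hz : 0 < z 0) => ?_⟩
    (fun y (hy : 0 < y 0) => ?_) (fun z (hz : 0 < z 0) => ?_)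
  · ext i
    by_cases hi : i = 0
    · simp [kernArgInv, kernArg, hi, hx.ne']
    · simp only [kernArgInv, kernArg, hi, if_false, if_true]
      field_simp
      ring
  · ext i
    by_cases hi : i = 0
    · simp [kernArgInv, kernArg, hi, hx.ne']
    · simp only [kernArgInv, kernArg, hi, if_false, if_true]
      field_simp
      ring
  · simpa [halfSpace, kernArg] using mul_pos hy hx
  · simpa [halfSpace, kernArgInv] using div_pos hz hx

noncomputable def kernArgDeriv (x y : Fin d → ℝ) : (Fin d → ℝ) →L[ℝ] (Fin d → ℝ) :=
  ContinuousLinearMap.pi fun i =>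
    if i = 0 then x 0 • ContinuousLinearMap.proj 0
    else (y i - x i) • ContinuousLinearMap.proj 0 + y 0 • ContinuousLinearMap.proj i

theorem hasFDerivAt_kernArg (x y : Fin d → ℝ) :
    HasFDerivAt (kernArg x) (kernArgDeriv x y) y := by
  rw [hasFDerivAt_pi']
  intro i
  have h0 :=
    (ContinuousLinearMap.proj (R := ℝ) (φ := fun _ : Fin d => ℝ) 0).hasFDerivAt (x := y)
  by_cases hi : i = 0
  · subst hi
    simpa [kernArg, kernArgDeriv] using h0.mul_const (x 0)
  · have hi' := ((ContinuousLinearMap.proj (R := ℝ) (φ := fun _ : Fin d => ℝ) i).hasFDerivAt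
      (x := y)).sub_const (x i)
    simpa [kernArg, kernArgDeriv, hi, add_comm] using h0.fun_mul hi'

theorem det_kernArgDeriv (x y : Fin d → ℝ) :
    (kernArgDeriv x y).det = x 0 * y 0 ^ (d - 1) := by
  set M := LinearMap.toMatrix' (kernArgDeriv x y : (Fin d → ℝ) →ₗ[ℝ] (Fin d → ℝ))
  have hM : ∀ i j, M i j = if i = 0 then (if j = 0 then x 0 else 0)
      else (if j = 0 then y i - x i else 0) + if i = j then y 0 else 0 := by
    intro i j
    by_cases hi : i = 0 <;> by_cases hj : j = 0 <;>
      simp [M, kernArgDeriv, hi, hj, eq_comm, Pi.single_apply]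
  have hlower : M.IsLowerTriangular := by
    intro i j (hij : i < j)
    have hj : j ≠ 0 := by rintro rfl; exact Fin.not_lt_zero i hij
    by_cases hi : i = 0 <;> simp [hM, hi, hj, hij.ne]
  rw [ContinuousLinearMap.det, ← LinearMap.det_toMatrix',
    Matrix.det_of_isLowerTriangular _ hlower]
  have hdiag : ∀ i, M i i = if i = 0 then x 0 else y 0 := fun i => by
    by_cases hi : i = 0 <;> simp [hM, hi]
  rw [Finset.prod_congr rfl fun i _ => hdiag i, Finset.prod_ite]
  simp [Finset.filter_ne', Finset.filter_eq']

theorem rpow_natCast_sub_one (a : ℝ) : a ^ ((d : ℝ) - 1) = a ^ (d - 1) := by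
  rw [← Real.rpow_natCast, Nat.cast_sub (Nat.one_le_iff_ne_zero.mpr (NeZero.ne d)), Nat.cast_one]

theorem abs_det_kernArgDeriv {x y : Fin d → ℝ} (hx : 0 < x 0) (hy : y ∈ halfSpace d) :
    |(kernArgDeriv x y).det| = x 0 * y 0 ^ ((d : ℝ) - 1) := by
  rw [det_kernArgDeriv, rpow_natCast_sub_one]
  exact abs_of_pos (mul_pos hx (pow_pos hy _))

theorem integrableOn_halfSpace_comp_kernArg_iff {x : Fin d → ℝ} (hx : 0 < x 0)
    {g : (Fin d → ℝ) → ℝ} :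
    IntegrableOn (fun y => x 0 * y 0 ^ ((d : ℝ) - 1) * g (kernArg x y)) (halfSpace d) ↔
      IntegrableOn g (halfSpace d) := by
  conv_rhs => rw [← (bijOn_kernArg hx).image_eq]
  rw [integrableOn_image_iff_integrableOn_abs_det_fderiv_smul volume measurableSet_halfSpace
    (fun y _ => (hasFDerivAt_kernArg x y).hasFDerivWithinAt) (bijOn_kernArg hx).injOn]
  refine integrableOn_congr_fun (fun y hy => ?_) measurableSet_halfSpace
  rw [abs_det_kernArgDeriv hx hy, smul_eq_mul]

theorem integral_halfSpace_comp_kernArg {x : Fin d → ℝ} (hx : 0 < x 0)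
    (g : (Fin d → ℝ) → ℝ) :
    ∫ y in halfSpace d, x 0 * y 0 ^ ((d : ℝ) - 1) * g (kernArg x y) =
      ∫ z in halfSpace d, g z := by
  conv_rhs => rw [← (bijOn_kernArg hx).image_eq]
  rw [integral_image_eq_integral_abs_det_fderiv_smul volume measurableSet_halfSpace
    (fun y _ => (hasFDerivAt_kernArg x y).hasFDerivWithinAt) (bijOn_kernArg hx).injOn]
  refine setIntegral_congr_fun measurableSet_halfSpace fun y hy => ?_
  rw [abs_det_kernArgDeriv hx hy, smul_eq_mul]

end KernArg

theorem stmt7_general (d : ℕ) [NeZero d] (γ : ℝ)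
    (ζ : (Fin d → ℝ) → ℝ) (hζ : ContDiff ℝ 1 ζ) (hζ0 : ∀ z, 0 ≤ ζ z)
    (hζc : HasCompactSupport ζ)
    (x : Fin d → ℝ) (hx : 0 < x 0) :
    ∫ y in {y : Fin d → ℝ | 0 < y 0}, gradNorm d (fun x' => kern d γ ζ y x') x ≤
      (x 0) ^ (γ - 1) *
        (|γ + 1| * (∫ z in {z : Fin d → ℝ | 0 < z 0}, ζ z) +
          2 * ∫ z in {z : Fin d → ℝ | 0 < z 0}, gradNorm d ζ z * z 0) := by
  set G : (Fin d → ℝ) → ℝ := fun z => gradNorm d ζ z * z 0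
  have hζint : IntegrableOn ζ (halfSpace d) :=
    (hζ.continuous.integrable_of_hasCompactSupport hζc).integrableOn
  have hGint : IntegrableOn G (halfSpace d) :=
    ((hζ.continuous_gradNorm.mul (continuous_apply 0)).integrable_of_hasCompactSupport
      hζc.gradNorm.mul_right).integrableOn
  have hG0 : 0 ≤ ∫ z in halfSpace d, G z :=
    setIntegral_nonneg measurableSet_halfSpace fun z hz => mul_nonneg (Real.sqrt_nonneg _) hz.le
  have hmajorant : IntegrableOn (fun y => x 0 * y 0 ^ ((d : ℝ) - 1) *
      (|γ + 1| * ζ (kernArg x y) + G (kernArg x y))) (halfSpace d) :=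
    (integrableOn_halfSpace_comp_kernArg_iff hx).2 ((hζint.const_mul _).add hGint)
  calc ∫ y in halfSpace d, gradNorm d (kern d γ ζ y) x
      ≤ ∫ y in halfSpace d, x 0 ^ (γ - 1) * (x 0 * y 0 ^ ((d : ℝ) - 1) *
          (|γ + 1| * ζ (kernArg x y) + G (kernArg x y))) :=
        integral_mono_of_nonneg (.of_forall fun y => Real.sqrt_nonneg _) (hmajorant.const_mul _)
          ((ae_restrict_iff' measurableSet_halfSpace).2 (.of_forall fun y hy =>
            gradNorm_kern_le (hζ.differentiable one_ne_zero) hζ0 hx hy))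
    _ = x 0 ^ (γ - 1) * (|γ + 1| * (∫ z in halfSpace d, ζ z) + ∫ z in halfSpace d, G z) := by
        rw [integral_const_mul,
          integral_halfSpace_comp_kernArg hx (fun z => |γ + 1| * ζ z + G z),
          integral_add (hζint.const_mul _) hGint, integral_const_mul]
    _ ≤ x 0 ^ (γ - 1) *
          (|γ + 1| * (∫ z in halfSpace d, ζ z) + 2 * ∫ z in halfSpace d, G z) := by
        gcongr
        exact le_mul_of_one_le_left hG0 one_le_two

/-- Gradient kernel estimate from the proof of Lemma 6.1.2: for a nonnegative
`C¹` function `ζ` with compact support in `ℝ^d_+` and every `x ∈ ℝ^d_+`,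
`∫_{ℝ^d_+} |D_x ζ^y(x)| dy
  ≤ (x¹)^{γ−1} (|γ+1| ∫ ζ + N_d ∫ |Dζ(z)| z¹ dz)` with `N_d = 2`. -/
theorem stmt7 (d : ℕ) [NeZero d] (γ : ℝ)
    (ζ : (Fin d → ℝ) → ℝ) (hζ : ContDiff ℝ 1 ζ) (hζ0 : ∀ z, 0 ≤ ζ z)
    (hζc : HasCompactSupport ζ) (hζsupp : tsupport ζ ⊆ {z | 0 < z 0})
    (x : Fin d → ℝ) (hx : 0 < x 0) :
    ∫ y in {y : Fin d → ℝ | 0 < y 0}, gradNorm d (fun x' => kern d γ ζ y x') x ≤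
      (x 0) ^ (γ - 1) *
        (|γ + 1| * (∫ z in {z : Fin d → ℝ | 0 < z 0}, ζ z) +
          2 * ∫ z in {z : Fin d → ℝ | 0 < z 0}, gradNorm d ζ z * z 0) :=
  stmt7_general d γ ζ hζ hζ0 hζc x hx
end
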